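/- (Causality of the Dirac current, Lorentzian) In signature (1,1), for either admissible bilinear B with Dirac current κ, one has ‖κ_ε‖² = (ε̄ε)² − (ε̄Γ*ε)²; consequently κ_ε is null (‖κ_ε‖² = 0) if and only if ε is chiral (an eigenvector of Γ* = σ₃ or zero), and otherwise κ_ε is spacelike when B = σ₁ and timelike when B = Ω. -/
import Mathlib


open Matrix

/-- Gamma matrices with raised index in signature (1,1): Γ⁰ = −Ω, Γ¹ = σ₁. -/
def GammaLUp : Fin 2 → Matrix (Fin 2) (Fin 2) ℝ :=
  ![-(!![0, 1; -1, 0]), !![0, 1; 1, 0]]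

/-- Γ* = σ₃. -/
def GstarL : Matrix (Fin 2) (Fin 2) ℝ := !![1, 0; 0, -1]

/-- A spinor is chiral iff it lies in ℝe₁ ∪ ℝe₂, i.e., is an eigenvector of Γ* = σ₃ or zero. -/
def chiral (ε : Fin 2 → ℝ) : Prop := ε 1 = 0 ∨ ε 0 = 0

/-- The Lorentzian norm-squared ‖κ_ε‖² = −(κ⁰)² + (κ¹)² of the Dirac current of `ε`
with respect to the bilinear `B`. -/
def kNormSq (B : (Fin 2 → ℝ) → (Fin 2 → ℝ) → ℝ) (ε : Fin 2 → ℝ) : ℝ :=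
  -(B ε (GammaLUp 0 *ᵥ ε)) ^ 2 + (B ε (GammaLUp 1 *ᵥ ε)) ^ 2


lemma kA (ε : Fin 2 → ℝ) : kNormSq (fun ε ε' => ε ⬝ᵥ (!![0, 1; 1, 0] *ᵥ ε')) ε = 4 * (ε 0)^2 * (ε 1)^2 := by
  simp [kNormSq, GammaLUp, Matrix.mulVec, dotProduct, Fin.sum_univ_two]
  ring

lemma kB (ε : Fin 2 → ℝ) : kNormSq (fun ε ε' => ε ⬝ᵥ (!![0, 1; -1, 0] *ᵥ ε')) ε = -(4 * (ε 0)^2 * (ε 1)^2) := by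
  simp [kNormSq, GammaLUp, Matrix.mulVec, dotProduct, Fin.sum_univ_two]
  ring

lemma chiral_iff (ε : Fin 2 → ℝ) : (4 * (ε 0)^2 * (ε 1)^2 = 0) ↔ chiral ε := by
  unfold chiral
  constructor
  · intro h
    rcases mul_eq_zero.1 h with h | h
    · rcases mul_eq_zero.1 h with h | h
      · norm_num at h
      · right; exact pow_eq_zero_iff (by norm_num) |>.1 h
    · left; exact pow_eq_zero_iff (by norm_num) |>.1 h
  · rintro (h | h) <;> simp [h]

/-- Causality of the Dirac current in signature (1,1) for both admissible bilinears. -/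
theorem dirac_current_causality_lorentzian :
    ((∀ ε : Fin 2 → ℝ,
        kNormSq (fun ε ε' => ε ⬝ᵥ (!![0, 1; 1, 0] *ᵥ ε')) ε =
          (ε ⬝ᵥ (!![0, 1; 1, 0] *ᵥ ε)) ^ 2 -
            (ε ⬝ᵥ (!![0, 1; 1, 0] *ᵥ (GstarL *ᵥ ε))) ^ 2) ∧
      (∀ ε : Fin 2 → ℝ,
        kNormSq (fun ε ε' => ε ⬝ᵥ (!![0, 1; 1, 0] *ᵥ ε')) ε = 0 ↔ chiral ε) ∧
      ∀ ε : Fin 2 → ℝ, ¬chiral ε →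
        kNormSq (fun ε ε' => ε ⬝ᵥ (!![0, 1; 1, 0] *ᵥ ε')) ε > 0) ∧
    ((∀ ε : Fin 2 → ℝ,
        kNormSq (fun ε ε' => ε ⬝ᵥ (!![0, 1; -1, 0] *ᵥ ε')) ε =
          (ε ⬝ᵥ (!![0, 1; -1, 0] *ᵥ ε)) ^ 2 -
            (ε ⬝ᵥ (!![0, 1; -1, 0] *ᵥ (GstarL *ᵥ ε))) ^ 2) ∧
      (∀ ε : Fin 2 → ℝ,
        kNormSq (fun ε ε' => ε ⬝ᵥ (!![0, 1; -1, 0] *ᵥ ε')) ε = 0 ↔ chiral ε) ∧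
      ∀ ε : Fin 2 → ℝ, ¬chiral ε →
        kNormSq (fun ε ε' => ε ⬝ᵥ (!![0, 1; -1, 0] *ᵥ ε')) ε < 0) := by
  refine ⟨⟨fun ε => ?_, fun ε => ?_, fun ε h => ?_⟩, fun ε => ?_, fun ε => ?_, fun ε h => ?_⟩
  · rw [kA]
    simp [GstarL, Matrix.mulVec, dotProduct, Fin.sum_univ_two]
    ring
  · rw [kA]; exact chiral_iff ε
  · rw [kA]
    rcases lt_or_eq_of_le (by positivity : (0:ℝ) ≤ 4 * (ε 0)^2 * (ε 1)^2) with h' | h'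
    · exact h'
    · exact absurd ((chiral_iff ε).1 h'.symm) h
  · rw [kB]
    simp [GstarL, Matrix.mulVec, dotProduct, Fin.sum_univ_two]
    ring
  · rw [kB, neg_eq_zero]; exact chiral_iff ε
  · rw [kB, neg_lt, neg_zero]
    rcases lt_or_eq_of_le (by positivity : (0:ℝ) ≤ 4 * (ε 0)^2 * (ε 1)^2) with h' | h'
    · exact h'
    · exact absurd ((chiral_iff ε).1 h'.symm) h
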